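/- For every k ∈ ℕ with k ≥ 1 and every h ∈ ℂ with Re(h) > 1, the defining series of L_q^h(s, χ) converge at s = 1 − k and L_q^h(1−k, χ) = − β_{k,χ,q}^h / k. -/

import Mathlib

open Complex Finset Filter

/-- Complex power `q^z := exp(z·log q)` for a real base `q`. -/
noncomputable def qcpow (q : ℝ) (z : ℂ) : ℂ := Complex.exp (z * (Real.log q : ℂ))

/-- The complex `q`-number `[z]_q = (1 - q^z)/(1 - q)`. -/
noncomputable def qnum (q : ℝ) (z : ℂ) : ℂ := (1 - qcpow q z) / (1 - (q : ℂ))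

/-- The real `q`-number `[y]_q = (1 - q^y)/(1 - q)` for real `y`. -/
noncomputable def qnumR (q : ℝ) (y : ℝ) : ℝ := (1 - Real.exp (y * Real.log q)) / (1 - q)

/-- The `(h,q)`-Bernoulli polynomial
`β_{n,q}^h(x) = (1-q)^{-n} ∑_{l=0}^{n} C(n,l) (-1)^l q^{lx} (l+h-1)/[l+h-1]_q`. -/
noncomputable def qbeta (q : ℝ) (h : ℂ) (n : ℕ) (x : ℝ) : ℂ :=
  (1 - (q : ℂ))⁻¹ ^ n * ∑ l ∈ Finset.range (n + 1),
    (n.choose l : ℂ) * (-1) ^ l * qcpow q ((l : ℂ) * (x : ℂ)) *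
      (((l : ℂ) + h - 1) / qnum q ((l : ℂ) + h - 1))

/-- The generalized `(h,q)`-Bernoulli polynomial attached to a Dirichlet character `χ` mod `f`:
`β_{n,χ,q}^h(x) = [f]_q^{n-1} ∑_{a=0}^{f-1} χ(a) q^{(h-1)a} β_{n,q^f}^h((x+a)/f)`. -/
noncomputable def qbetaChi (q : ℝ) (h : ℂ) (f : ℕ) (χ : DirichletCharacter ℂ f)
    (n : ℕ) (x : ℝ) : ℂ :=
  qnum q (f : ℂ) ^ ((n : ℤ) - 1) * ∑ a ∈ Finset.range f,
    χ (a : ZMod f) * qcpow q ((h - 1) * (a : ℂ)) * qbeta (q ^ f) h n ((x + a) / f)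

/-- The Hurwitz-type `(h,q)`-`L`-function
`L_q^h(s, χ | x) = ((h-1)(1-q)/(s-1)) ∑ q^{(h-1)m} χ(m)/[x+m]_q^{s-1}
  + ∑ q^{hm+x} χ(m)/[x+m]_q^s`. -/
noncomputable def hqLH (q : ℝ) (h s : ℂ) (f : ℕ) (χ : DirichletCharacter ℂ f) (x : ℝ) : ℂ :=
  ((h - 1) * (1 - (q : ℂ)) / (s - 1)) *
    (∑' m : ℕ, qcpow q ((h - 1) * (m : ℂ)) * χ (m : ZMod f) /
      Complex.exp ((s - 1) * (Real.log (qnumR q (x + m)) : ℂ))) +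
  ∑' m : ℕ, qcpow q (h * (m : ℂ) + (x : ℂ)) * χ (m : ZMod f) /
    Complex.exp (s * (Real.log (qnumR q (x + m)) : ℂ))

/-- The Dirichlet-type `(h,q)`-`L`-function
`L_q^h(s, χ) = ((h-1)(1-q)/(s-1)) ∑_{m≥1} q^{(h-1)m} χ(m)/[m]_q^{s-1}
  + ∑_{m≥1} q^{hm} χ(m)/[m]_q^s`. -/
noncomputable def hqL (q : ℝ) (h s : ℂ) (f : ℕ) (χ : DirichletCharacter ℂ f) : ℂ :=
  ((h - 1) * (1 - (q : ℂ)) / (s - 1)) *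
    (∑' m : ℕ, qcpow q ((h - 1) * ((m : ℂ) + 1)) * χ ((m + 1 : ℕ) : ZMod f) /
      Complex.exp ((s - 1) * (Real.log (qnumR q ((m : ℝ) + 1)) : ℂ))) +
  ∑' m : ℕ, qcpow q (h * ((m : ℂ) + 1)) * χ ((m + 1 : ℕ) : ZMod f) /
    Complex.exp (s * (Real.log (qnumR q ((m : ℝ) + 1)) : ℂ))

/-!
At `s = 1 - k` the powers `[m]_q^k` and `[m]_q^(k-1)` are polynomials in `q^m`, so after a binomial
expansion both defining series become finite combinations of `∑_{m ≥ 1} χ(m) x^m` at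
`x = q^(h-1+l)`. Periodicity of `χ` sums this to `(∑_{a<f} χ(a) x^a) / (1 - x^f)`, and the same closed
form appears in `β_{k,χ,q}^h` once the sum over `a` is exchanged with the binomial sum. The identity
`l·C(k,l) = k·C(k-1,l-1)` then matches the two sides.
-/

lemma qcpow_add (q : ℝ) (z w : ℂ) : qcpow q (z + w) = qcpow q z * qcpow q w := by
  rw [qcpow, qcpow, qcpow, add_mul, Complex.exp_add]

lemma qcpow_mul_natCast (q : ℝ) (z : ℂ) (n : ℕ) : qcpow q (z * n) = qcpow q z ^ n := by
  rw [qcpow, qcpow, mul_comm z, mul_assoc, Complex.exp_nat_mul]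

lemma qcpow_natCast {q : ℝ} (hq : 0 < q) (n : ℕ) : qcpow q n = (q : ℂ) ^ n := by
  rw [← one_mul (n : ℂ), qcpow_mul_natCast, qcpow, one_mul, ← Complex.ofReal_exp, Real.exp_log hq]

lemma qcpow_pow (q : ℝ) (f : ℕ) (z : ℂ) : qcpow (q ^ f) z = qcpow q (z * f) := by
  rw [qcpow, qcpow, Real.log_pow]
  push_cast
  ring_nf

lemma norm_qcpow_lt_one {q : ℝ} (hq0 : 0 < q) (hq1 : q < 1) {z : ℂ} (hz : 0 < z.re) :
    ‖qcpow q z‖ < 1 := by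
  rw [qcpow, Complex.norm_exp, Real.exp_lt_one_iff, Complex.re_mul_ofReal]
  exact mul_neg_of_pos_of_neg hz (Real.log_neg hq0 hq1)

lemma qnumR_natCast {q : ℝ} (hq : 0 < q) (n : ℕ) : qnumR q n = (1 - q ^ n) / (1 - q) := by
  rw [qnumR, Real.exp_nat_mul, Real.exp_log hq]

lemma qnum_pow (q : ℝ) (f : ℕ) (z : ℂ) :
    qnum (q ^ f) z = (1 - qcpow q z ^ f) / (1 - (q : ℂ) ^ f) := by
  rw [qnum, qcpow_pow, qcpow_mul_natCast]
  push_cast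
  rfl

section CharGenFun

variable {f : ℕ} (χ : DirichletCharacter ℂ f)

noncomputable def charGenFun (x : ℂ) : ℂ := (∑ a ∈ range f, χ a * x ^ a) / (1 - x ^ f)

variable {χ} {x : ℂ}

lemma summable_char_mul_pow (hx : ‖x‖ < 1) : Summable fun m : ℕ ↦ χ m * x ^ m :=
  .of_norm_bounded (summable_geometric_of_lt_one (norm_nonneg x) hx) fun m ↦ by
    rw [norm_mul, norm_pow]
    exact mul_le_of_le_one_left (by positivity) (χ.norm_le_one _)

lemma hasSum_char_mul_pow [NeZero f] (hx : ‖x‖ < 1) :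
    HasSum (fun m : ℕ ↦ χ m * x ^ m) (charGenFun χ x) := by
  have hs := summable_char_mul_pow (χ := χ) hx
  have hxf : 1 - x ^ f ≠ 0 := by
    refine sub_ne_zero.2 fun h ↦ (pow_lt_one₀ (norm_nonneg x) hx (NeZero.ne f)).ne ?_
    rw [← norm_pow, ← h, norm_one]
  -- periodicity of `χ` makes the tail after `f` terms equal to `x ^ f` times the whole sum
  have hrec : ∑' m : ℕ, χ m * x ^ m
      = ∑ a ∈ range f, χ a * x ^ a + x ^ f * ∑' m : ℕ, χ m * x ^ m := by
    conv_lhs => rw [← hs.sum_add_tsum_nat_add f]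
    rw [← tsum_mul_left]
    congr 1
    refine tsum_congr fun m ↦ ?_
    rw [Nat.cast_add, ZMod.natCast_self, add_zero, pow_add]
    ring
  convert hs.hasSum using 1
  rw [charGenFun, div_eq_iff hxf]
  linear_combination -hrec

lemma hasSum_char_mul_pow_succ [NeZero f] (hχ : χ 0 = 0) (hx : ‖x‖ < 1) :
    HasSum (fun m : ℕ ↦ χ (m + 1 : ℕ) * x ^ (m + 1)) (charGenFun χ x) := by
  simpa [hχ] using (hasSum_nat_add_iff' 1).2 (hasSum_char_mul_pow (χ := χ) hx)

end CharGenFun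

lemma one_sub_pow_eq_sum {R : Type*} [CommRing R] (y : R) (n : ℕ) :
    (1 - y) ^ n = ∑ l ∈ range (n + 1), (n.choose l : R) * (-1) ^ l * y ^ l := by
  rw [sub_eq_neg_add, add_pow]
  refine sum_congr rfl fun l _ ↦ ?_
  rw [one_pow, neg_pow]
  ring

section LSeries

variable {q : ℝ} {f : ℕ} [NeZero f] {χ : DirichletCharacter ℂ f} {w : ℂ}

lemma hasSum_char_qcpow_mul_one_sub_pow (hq0 : 0 < q) (hq1 : q < 1) (hχ : χ 0 = 0)
    (hw : 0 < w.re) (n : ℕ) :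
    HasSum (fun m : ℕ ↦ χ (m + 1 : ℕ) * qcpow q (w * (m + 1)) * (1 - (q : ℂ) ^ (m + 1)) ^ n)
      (∑ l ∈ range (n + 1), (n.choose l : ℂ) * (-1) ^ l * charGenFun χ (qcpow q (w + l))) := by
  have hterm (m : ℕ) : χ (m + 1 : ℕ) * qcpow q (w * (m + 1)) * (1 - (q : ℂ) ^ (m + 1)) ^ n
      = ∑ l ∈ range (n + 1),
          (n.choose l : ℂ) * (-1) ^ l * (χ (m + 1 : ℕ) * qcpow q (w + l) ^ (m + 1)) := by
    have hpow (l : ℕ) :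
        qcpow q (w + l) ^ (m + 1) = qcpow q (w * (m + 1)) * ((q : ℂ) ^ (m + 1)) ^ l := by
      rw [← qcpow_natCast hq0, ← qcpow_mul_natCast, ← qcpow_mul_natCast, ← qcpow_add]
      push_cast
      ring_nf
    rw [one_sub_pow_eq_sum, mul_sum]
    exact sum_congr rfl fun l _ ↦ by rw [hpow]; ring
  refine (hasSum_sum fun l _ ↦ ?_).congr_fun hterm
  refine (hasSum_char_mul_pow_succ hχ (norm_qcpow_lt_one hq0 hq1 ?_)).mul_left _
  simpa using add_pos_of_pos_of_nonneg hw l.cast_nonneg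

lemma hasSum_hqL_series (hq0 : 0 < q) (hq1 : q < 1) (hχ : χ 0 = 0) (hw : 0 < w.re) (n : ℕ) :
    HasSum (fun m : ℕ ↦ qcpow q (w * ((m : ℂ) + 1)) * χ ((m + 1 : ℕ) : ZMod f) /
        Complex.exp (-(n : ℂ) * (Real.log (qnumR q ((m : ℝ) + 1)) : ℂ)))
      ((∑ l ∈ range (n + 1), (n.choose l : ℂ) * (-1) ^ l * charGenFun χ (qcpow q (w + l))) /
        (1 - (q : ℂ)) ^ n) := by
  refine ((hasSum_char_qcpow_mul_one_sub_pow hq0 hq1 hχ hw n).div_const _).congr_fun fun m ↦ ?_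
  have hqm : q ^ (m + 1) < 1 := pow_lt_one₀ hq0.le hq1 m.succ_ne_zero
  have hqnum : qnumR q ((m : ℝ) + 1) = (1 - q ^ (m + 1)) / (1 - q) := by
    exact_mod_cast qnumR_natCast hq0 (m + 1)
  have hpos : 0 < qnumR q ((m : ℝ) + 1) := by
    rw [hqnum]
    exact div_pos (by linarith) (by linarith)
  rw [div_eq_mul_inv, ← Complex.exp_neg, neg_mul, neg_neg, Complex.exp_nat_mul,
    ← Complex.ofReal_exp, Real.exp_log hpos, hqnum]
  push_cast
  rw [div_pow]
  ring

end LSeries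

lemma qbeta_pow_natCast_div (q : ℝ) (h : ℂ) {f : ℕ} (hf : f ≠ 0) (n a : ℕ) :
    qbeta (q ^ f) h n ((a : ℝ) / f) = (1 - (q : ℂ) ^ f)⁻¹ ^ n * (1 - (q : ℂ) ^ f) *
      ∑ l ∈ range (n + 1), (n.choose l : ℂ) * (-1) ^ l * qcpow q (l * a) *
        (((l : ℂ) + h - 1) / (1 - qcpow q ((l : ℂ) + h - 1) ^ f)) := by
  have hfC : (f : ℂ) ≠ 0 := Nat.cast_ne_zero.2 hf
  rw [qbeta]
  push_cast
  rw [mul_assoc, mul_sum (s := range (n + 1)) (a := 1 - (q : ℂ) ^ f)]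
  congr 1
  refine sum_congr rfl fun l _ ↦ ?_
  rw [qcpow_pow, qnum_pow, div_div_eq_mul_div, mul_assoc (l : ℂ), div_mul_cancel₀ _ hfC]
  ring

lemma qbetaChi_zero_eq {q : ℝ} (hq0 : 0 < q) (hq1 : q < 1) (h : ℂ) {f : ℕ} (hf : f ≠ 0)
    (χ : DirichletCharacter ℂ f) (n : ℕ) :
    qbetaChi q h f χ n 0 = (1 - (q : ℂ))⁻¹ ^ ((n : ℤ) - 1) *
      ∑ l ∈ range (n + 1), (n.choose l : ℂ) * (-1) ^ l *
        (((l : ℂ) + (h - 1)) * charGenFun χ (qcpow q (h - 1 + l))) := by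
  have hW : (1 : ℂ) - (q : ℂ) ^ f ≠ 0 := by
    exact_mod_cast (sub_pos.2 (pow_lt_one₀ hq0.le hq1 hf)).ne'
  have hconst : qnum q f ^ ((n : ℤ) - 1) * ((1 - (q : ℂ) ^ f)⁻¹ ^ n * (1 - (q : ℂ) ^ f))
      = (1 - (q : ℂ))⁻¹ ^ ((n : ℤ) - 1) := by
    have hW' : (1 - (q : ℂ) ^ f)⁻¹ ^ n * (1 - (q : ℂ) ^ f)
        = ((1 - (q : ℂ) ^ f) ^ ((n : ℤ) - 1))⁻¹ := by
      rw [zpow_sub_one₀ hW, zpow_natCast, mul_inv, inv_inv, inv_pow]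
    rw [hW', qnum, qcpow_natCast hq0, div_eq_mul_inv, mul_zpow, mul_right_comm,
      mul_inv_cancel₀ (zpow_ne_zero _ hW), one_mul]
  have hchar (a l : ℕ) : χ a * qcpow q ((h - 1) * a) * qcpow q (l * a)
      = χ a * qcpow q (h - 1 + l) ^ a := by
    rw [mul_assoc, ← qcpow_add, ← qcpow_mul_natCast]
    ring_nf
  rw [qbetaChi, ← hconst, mul_assoc]
  congr 1
  simp only [zero_add, qbeta_pow_natCast_div q h hf, mul_sum]
  rw [sum_comm]
  refine sum_congr rfl fun l _ ↦ ?_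
  simp only [charGenFun, div_eq_mul_inv, sum_mul, mul_sum]
  refine sum_congr rfl fun a _ ↦ ?_
  rw [show (l : ℂ) + h - 1 = h - 1 + l by ring, ← hchar]
  ring

lemma sum_range_choose_mul_neg_one_pow_mul_add {R : Type*} [CommRing R] (c : R) (g : ℕ → R)
    (n : ℕ) :
    ∑ l ∈ range (n + 2), ((n + 1).choose l : R) * (-1) ^ l * (((l : R) + c) * g l)
      = c * ∑ l ∈ range (n + 2), ((n + 1).choose l : R) * (-1) ^ l * g l
        - (n + 1) * ∑ l ∈ range (n + 1), (n.choose l : R) * (-1) ^ l * g (l + 1) := by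
  have hderiv : ∑ l ∈ range (n + 2), ((n + 1).choose l : R) * (-1) ^ l * (l * g l)
      = -((n + 1) * ∑ l ∈ range (n + 1), (n.choose l : R) * (-1) ^ l * g (l + 1)) := by
    rw [sum_range_succ', mul_sum, ← sum_neg_distrib]
    simp only [Nat.cast_zero, zero_mul, mul_zero, add_zero]
    refine sum_congr rfl fun l _ ↦ ?_
    have hchoose := congrArg (Nat.cast : ℕ → R) (Nat.add_one_mul_choose_eq n l)
    push_cast at hchoose ⊢
    linear_combination ((-1) ^ l * g (l + 1)) * hchoose
  calc _ = ∑ l ∈ range (n + 2), ((n + 1).choose l : R) * (-1) ^ l * (l * g l)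
        + c * ∑ l ∈ range (n + 2), ((n + 1).choose l : R) * (-1) ^ l * g l := by
        rw [mul_sum, ← sum_add_distrib]
        exact sum_congr rfl fun l _ ↦ by ring
    _ = _ := by rw [hderiv]; ring

/-- for non-trivial `χ`, `L_q^h(1-k, χ) = -β_{k,χ,q}^h/k` for `k ≥ 1`,
with the defining series converging at `s = 1-k`. -/
theorem hqL_neg_nat (q : ℝ) (hq0 : 0 < q) (hq1 : q < 1)
    (h : ℂ) (hh : 1 < h.re) (f : ℕ) (hf : 1 ≤ f) (χ : DirichletCharacter ℂ f)
    (hχ : χ ≠ 1) (k : ℕ) (hk : 1 ≤ k) :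
    Summable (fun m : ℕ => qcpow q ((h - 1) * ((m : ℂ) + 1)) * χ ((m + 1 : ℕ) : ZMod f) /
      Complex.exp (((1 - (k : ℂ)) - 1) * (Real.log (qnumR q ((m : ℝ) + 1)) : ℂ))) ∧
    Summable (fun m : ℕ => qcpow q (h * ((m : ℂ) + 1)) * χ ((m + 1 : ℕ) : ZMod f) /
      Complex.exp ((1 - (k : ℂ)) * (Real.log (qnumR q ((m : ℝ) + 1)) : ℂ))) ∧
    hqL q h (1 - (k : ℂ)) f χ = -qbetaChi q h f χ k 0 / (k : ℂ) := by
  obtain ⟨n, rfl⟩ : ∃ n, k = n + 1 := ⟨k - 1, by omega⟩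
  have hf₁ : f ≠ 1 := by
    rintro rfl
    exact hχ (Subsingleton.elim _ _)
  have : NeZero f := ⟨by omega⟩
  have hχ₀ : χ 0 = 0 := χ.map_zero' hf₁
  have H₁ := hasSum_hqL_series hq0 hq1 hχ₀ (w := h - 1) (by simpa using hh) (n + 1)
  have H₂ := hasSum_hqL_series hq0 hq1 hχ₀ (w := h) (by linarith) n
  have hs₁ : 1 - ((n + 1 : ℕ) : ℂ) - 1 = -((n + 1 : ℕ) : ℂ) := by ring
  have hs₂ : 1 - ((n + 1 : ℕ) : ℂ) = -(n : ℂ) := by push_cast; ring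
  have hshift (l : ℕ) : h - 1 + ((l + 1 : ℕ) : ℂ) = h + l := by push_cast; ring
  refine ⟨hs₁ ▸ H₁.summable, hs₂ ▸ H₂.summable, ?_⟩
  rw [hqL, hs₁, hs₂, H₁.tsum_eq, H₂.tsum_eq, qbetaChi_zero_eq hq0 hq1 h (by omega),
    sum_range_choose_mul_neg_one_pow_mul_add]
  simp only [hshift]
  have hq : (1 : ℂ) - q ≠ 0 := by exact_mod_cast (sub_pos.2 hq1).ne'
  have hn : (n : ℂ) + 1 ≠ 0 := n.cast_add_one_ne_zero
  push_cast
  rw [add_sub_cancel_right, zpow_natCast, inv_pow]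
  field_simp
  ring
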